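/- arXiv:2011.02931 — 3 statements merged into one kernel-verified Lean document; each statement's English description precedes it below -/
import Mathlib

section
/- Let A be a complex unital Banach algebra and let Λ : A → ℂ be a ℂ-linear functional (not assumed continuous) such that Λ(1) = 1 and Λ(a) ≠ 0 for every invertible element a ∈ A. Then Λ(a²) = Λ(a)² for all a ∈ A. -/
/-!
Since `Λ 1 = 1` and `Λ` does not vanish on units, `Λ x` lies in the spectrum of `x`, so `Λ` is
bounded. Subtracting `Λ a • 1` reduces the claim to `Λ b = 0 → Λ (b ^ 2) = 0`. For such `b`, the
entire function `f z = Λ (exp (z • b))` has no zeros (each `exp (z • b)` is a unit), is of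
exponential type and satisfies `f 0 = 1`, `f' 0 = Λ b = 0`. Taking a logarithm `f = exp ∘ g`, the
real part of `g` grows at most linearly; by Borel–Carathéodory so does `‖g‖`, and then `g` is affine
by Cauchy's estimate and Liouville. Hence `f = exp (α + β z)` with `β = f' 0 = 0`, so `f` is
constant and `Λ (b ^ 2) = f'' 0 = 0`.
-/

open Metric NormedSpace

namespace Complex

variable {f g : ℂ → ℂ}

theorem _root_.Differentiable.exists_exp_eq_of_ne_zero (hf : Differentiable ℂ f)
    (hne : ∀ z, f z ≠ 0) : ∃ g : ℂ → ℂ, Differentiable ℂ g ∧ ∀ z, exp (g z) = f z := by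
  obtain ⟨g, hg0, hg⟩ := ((hf.deriv.div hf hne).isExactOn_univ).with_val_at 0 (log (f 0))
  have hg' : ∀ z, HasDerivAt g (deriv f z / f z) z := fun z => hg z (Set.mem_univ z)
  have hconst : ∀ z, HasDerivAt (fun w => exp (-g w) * f w) 0 z := fun z =>
    ((hg' z).neg.cexp.mul (hf z).hasDerivAt).congr_deriv (by field_simp [hne z]; ring)
  refine ⟨g, fun z => (hg' z).differentiableAt, fun z => ?_⟩
  have := is_const_of_deriv_eq_zero (fun w => (hconst w).differentiableAt)
    (fun w => (hconst w).deriv) z 0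
  rwa [hg0, exp_neg, exp_neg, exp_log (hne 0), inv_mul_cancel₀ (hne 0),
    inv_mul_eq_one₀ (exp_ne_zero _)] at this

theorem _root_.Differentiable.exists_norm_le_of_re_le (hg : Differentiable ℂ g) {A B : ℝ}
    (hre : ∀ z, (g z).re ≤ A + B * ‖z‖) : ∃ a b : ℝ, ∀ z, ‖g z‖ ≤ a + b * ‖z‖ := by
  -- the constants come from Borel–Carathéodory on the ball of radius `2 ‖z‖ + 1`
  refine ⟨2 * (|A| + |B| + 1) + 3 * ‖g 0‖, 4 * |B|, fun z => ?_⟩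
  set r := ‖z‖
  set M := |A| + |B| * (2 * r + 1) + 1
  have hr : 0 ≤ r := norm_nonneg z
  have hz : z ∈ ball (0 : ℂ) (2 * r + 1) := mem_ball_zero_iff.mpr (by linarith)
  have hmaps : Set.MapsTo g (ball 0 (2 * r + 1)) {w | w.re ≤ M} := fun w hw => by
    have hw : ‖w‖ < 2 * r + 1 := mem_ball_zero_iff.mp hw
    have : B * ‖w‖ ≤ |B| * (2 * r + 1) :=
      calc B * ‖w‖ ≤ |B| * ‖w‖ := by gcongr; exact le_abs_self B
        _ ≤ |B| * (2 * r + 1) := by gcongr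
    simp only [Set.mem_ofPred_eq, M]
    linarith [hre w, le_abs_self A]
  have hbc := borelCaratheodory (by positivity) hg.differentiableOn hmaps (by positivity) hz
  have h1 : r / (2 * r + 1 - r) ≤ 1 := by rw [div_le_one (by linarith)]; linarith
  have h3 : (2 * r + 1 + r) / (2 * r + 1 - r) ≤ 3 := by rw [div_le_iff₀ (by linarith)]; linarith
  calc ‖g z‖ ≤ 2 * M * (r / (2 * r + 1 - r)) + ‖g 0‖ * ((2 * r + 1 + r) / (2 * r + 1 - r)) := by
        simpa only [mul_div_assoc] using hbc
    _ ≤ 2 * M * 1 + ‖g 0‖ * 3 := by gcongr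
    _ = _ := by ring

theorem _root_.Differentiable.eq_add_mul_of_norm_le (hg : Differentiable ℂ g) {a b : ℝ}
    (hbound : ∀ z, ‖g z‖ ≤ a + b * ‖z‖) (z : ℂ) : g z = g 0 + deriv g 0 * z := by
  have hderiv_bdd : ∀ c, ‖deriv g c‖ ≤ |a| + 2 * |b| := fun c => by
    have hR : 0 < ‖c‖ + 1 := by positivity
    have hsphere : ∀ w ∈ sphere c (‖c‖ + 1), ‖g w‖ ≤ |a| + |b| * (2 * ‖c‖ + 1) := fun w hw => by
      have hw : ‖w‖ ≤ 2 * ‖c‖ + 1 := by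
        have := norm_le_norm_add_norm_sub' w c
        rw [← dist_eq_norm, mem_sphere.mp hw] at this
        linarith
      calc ‖g w‖ ≤ a + b * ‖w‖ := hbound w
        _ ≤ |a| + |b| * ‖w‖ := by gcongr; exacts [le_abs_self a, le_abs_self b]
        _ ≤ |a| + |b| * (2 * ‖c‖ + 1) := by gcongr
    calc ‖deriv g c‖ ≤ (|a| + |b| * (2 * ‖c‖ + 1)) / (‖c‖ + 1) :=
          norm_deriv_le_of_forall_mem_sphere_norm_le hR hg.diffContOnCl hsphere
      _ ≤ |a| + 2 * |b| := by
          rw [div_le_iff₀ hR]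
          nlinarith [abs_nonneg a, abs_nonneg b, norm_nonneg c]
  have hderiv_const : ∀ w, deriv g w = deriv g 0 := fun w =>
    hg.deriv.apply_eq_apply_of_bounded
      (isBounded_iff_forall_norm_le.mpr ⟨_, Set.forall_mem_range.mpr hderiv_bdd⟩) w 0
  have hzero : ∀ w, HasDerivAt (fun v => g v - deriv g 0 * v) 0 w := fun w =>
    ((hg w).hasDerivAt.sub ((hasDerivAt_id' w).const_mul (deriv g 0))).congr_deriv
      (by rw [hderiv_const w, mul_one, sub_self])
  have := is_const_of_deriv_eq_zero (fun w => (hzero w).differentiableAt)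
    (fun w => (hzero w).deriv) z 0
  simp only [mul_zero, sub_zero] at this
  linear_combination this

theorem _root_.Differentiable.exists_eq_exp_add_mul_of_norm_le (hf : Differentiable ℂ f)
    (hne : ∀ z, f z ≠ 0) {C B : ℝ} (hbound : ∀ z, ‖f z‖ ≤ C * Real.exp (B * ‖z‖)) :
    ∃ α β : ℂ, ∀ z, f z = exp (α + β * z) := by
  obtain ⟨g, hg, hfg⟩ := hf.exists_exp_eq_of_ne_zero hne
  have hC : 0 < C := by simpa using (norm_pos_iff.mpr (hne 0)).trans_le (hbound 0)
  have hre : ∀ z, (g z).re ≤ Real.log C + B * ‖z‖ := fun z => by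
    rw [← Real.exp_le_exp, Real.exp_add, Real.exp_log hC, ← norm_exp, hfg]
    exact hbound z
  obtain ⟨a, b, hab⟩ := hg.exists_norm_le_of_re_le hre
  exact ⟨g 0, deriv g 0, fun z => by rw [← hfg, hg.eq_add_mul_of_norm_le hab z]⟩

end Complex

theorem NormedSpace.norm_exp_le_mul_exp_norm (𝕂 : Type*) {𝔸 : Type*} [RCLike 𝕂] [NormedRing 𝔸]
    [NormedAlgebra 𝕂 𝔸] (x : 𝔸) : ‖exp x‖ ≤ max ‖(1 : 𝔸)‖ 1 * Real.exp ‖x‖ := by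
  rw [exp_eq_tsum 𝕂, Real.exp_eq_exp_ℝ]
  refine tsum_of_norm_bounded ((expSeries_div_hasSum_exp ‖x‖).mul_left _) fun n => ?_
  rw [norm_smul, norm_inv, RCLike.norm_natCast, inv_mul_eq_div, ← mul_div_assoc]
  gcongr
  rcases n.eq_zero_or_pos with rfl | hn
  · simp
  · exact (norm_pow_le' x hn).trans (le_mul_of_one_le_left (by positivity) (le_max_right _ _))

theorem LinearMap.apply_mem_spectrum {𝕜 A : Type*} [Field 𝕜] [Ring A] [Algebra 𝕜 A]
    (Λ : A →ₗ[𝕜] 𝕜) (h1 : Λ 1 = 1) (hinv : ∀ a : A, IsUnit a → Λ a ≠ 0) (x : A) :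
    Λ x ∈ spectrum 𝕜 x := fun hx =>
  hinv _ hx (by simp [Algebra.algebraMap_eq_smul_one, h1])

theorem LinearMap.map_sq_of_map_sq_eq_zero {R A : Type*} [CommRing R] [Ring A] [Algebra R A]
    (Λ : A →ₗ[R] R) (h1 : Λ 1 = 1) (hsq : ∀ b : A, Λ b = 0 → Λ (b ^ 2) = 0) (a : A) :
    Λ (a ^ 2) = Λ a ^ 2 := by
  set b := a - algebraMap R A (Λ a)
  have hb : Λ b = 0 := by simp [b, Algebra.algebraMap_eq_smul_one, h1]
  have ha : a ^ 2 = b ^ 2 + (2 * Λ a) • b + algebraMap R A (Λ a ^ 2) := by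
    simp only [b, Algebra.algebraMap_eq_smul_one, sq, sub_mul, mul_sub, smul_mul_assoc,
      mul_smul_comm, one_mul, mul_one]
    module
  rw [ha, map_add, map_add, hsq b hb, map_smul, hb]
  simp [Algebra.algebraMap_eq_smul_one, h1]

theorem ContinuousLinearMap.map_sq_eq_zero_of_map_eq_zero {A : Type*} [NormedRing A]
    [NormedAlgebra ℂ A] [CompleteSpace A] (Λ : A →L[ℂ] ℂ) (h1 : Λ 1 = 1)
    (hinv : ∀ a : A, IsUnit a → Λ a ≠ 0) {b : A} (hb : Λ b = 0) : Λ (b ^ 2) = 0 := by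
  set f : ℂ → ℂ := fun z => Λ (exp (z • b))
  have hf : ∀ z, HasDerivAt f (Λ (b * exp (z • b))) z := fun z =>
    Λ.hasFDerivAt.comp_hasDerivAt z (hasDerivAt_exp_smul_const' b z)
  have hbound : ∀ z, ‖f z‖ ≤ ‖Λ‖ * max ‖(1 : A)‖ 1 * Real.exp (‖b‖ * ‖z‖) := fun z =>
    calc ‖f z‖ ≤ ‖Λ‖ * ‖exp (z • b)‖ := Λ.le_opNorm _
      _ ≤ ‖Λ‖ * (max ‖(1 : A)‖ 1 * Real.exp ‖z • b‖) := by
          gcongr; exact norm_exp_le_mul_exp_norm ℂ _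
      _ = ‖Λ‖ * max ‖(1 : A)‖ 1 * Real.exp (‖b‖ * ‖z‖) := by rw [norm_smul, mul_comm ‖z‖]; ring
  have hunit : ∀ z : ℂ, IsUnit (exp (z • b)) := fun z =>
    isUnit_exp_of_mem_ball (𝕂 := ℂ) ((expSeries_radius_eq_top ℂ A).symm ▸ edist_lt_top _ _)
  obtain ⟨α, β, hαβ⟩ := Differentiable.exists_eq_exp_add_mul_of_norm_le
    (fun z => (hf z).differentiableAt) (fun z => hinv _ (hunit z)) hbound
  have hf' : ∀ z, HasDerivAt f (β * f z) z := fun z => by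
    rw [funext hαβ, mul_comm]
    exact ((hasDerivAt_id' z).const_mul β).const_add α |>.cexp |>.congr_deriv (by ring)
  have hβ : β = 0 := by
    simpa [f, hb, h1] using ((hf 0).unique (hf' 0)).symm
  have hderiv_zero : (fun z => Λ (b * exp (z • b))) = fun _ => 0 := funext fun z => by
    simpa [hβ] using (hf z).unique (hf' z)
  have hsecond := Λ.hasFDerivAt.comp_hasDerivAt (0 : ℂ)
    ((hasDerivAt_exp_smul_const' b 0).const_mul b)
  rw [Function.comp_def, hderiv_zero] at hsecond
  simpa [sq] using hsecond.unique (hasDerivAt_const (0 : ℂ) (0 : ℂ))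

/-- If `A` is a complex unital Banach algebra and `Λ : A → ℂ` is a linear functional
(not assumed continuous) with `Λ 1 = 1` that is non-zero on every invertible element,
then `Λ (a²) = (Λ a)²` for every `a ∈ A`. -/
theorem gkz_square {A : Type*} [NormedRing A] [NormedAlgebra ℂ A] [CompleteSpace A]
    (Λ : A →ₗ[ℂ] ℂ) (h1 : Λ 1 = 1) (hinv : ∀ a : A, IsUnit a → Λ a ≠ 0) :
    ∀ a : A, Λ (a ^ 2) = (Λ a) ^ 2 := by
  have hbound : ∀ x : A, ‖Λ x‖ ≤ ‖(1 : A)‖ * ‖x‖ := fun x => by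
    simpa [mul_comm] using spectrum.norm_le_norm_mul_of_mem (Λ.apply_mem_spectrum h1 hinv x)
  exact Λ.map_sq_of_map_sq_eq_zero h1 fun b hb =>
    (Λ.mkContinuous ‖(1 : A)‖ hbound).map_sq_eq_zero_of_map_eq_zero h1 hinv hb
end

section
/- Let A be a unital associative algebra over ℂ (not necessarily commutative, with no topology assumed) and let Λ : A → ℂ be a ℂ-linear functional such that Λ(1) = 1 and Λ(a²) = Λ(a)² for all a ∈ A. Then Λ(ab) = Λ(a)Λ(b) for all a, b ∈ A. -/
/-!
Polarizing `Λ (a ^ 2) = Λ a ^ 2` gives the Jordan identity `Λ (a * b) + Λ (b * a) = 2 Λ a Λ b`.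
Applied to the pairs `(a, a * b + b * a)` and `(a ^ 2, b)` it yields `Λ (a * b * a) = Λ a ^ 2 Λ b`.
Expanding `Λ ((a * b + b * a) ^ 2)` with these two identities and eliminating `Λ (b * a)` leaves
`2 (Λ (a * b) - Λ a Λ b) ^ 2 = 0`.
-/

namespace LinearMap

variable {R A : Type*} [CommRing R] [Ring A] [Module R A] {Λ : A →ₗ[R] R}

theorem map_mul_add_map_mul_swap_of_map_sq (hsq : ∀ a, Λ (a ^ 2) = Λ a ^ 2) (a b : A) :
    Λ (a * b) + Λ (b * a) = 2 * Λ a * Λ b := by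
  have h := hsq (a + b)
  rw [show (a + b) ^ 2 = a ^ 2 + (a * b + b * a) + b ^ 2 by noncomm_ring] at h
  simp only [map_add, hsq] at h
  linear_combination h

theorem two_mul_map_mul_mul_self_of_map_sq (hsq : ∀ a, Λ (a ^ 2) = Λ a ^ 2) (a b : A) :
    2 * Λ (a * b * a) = 2 * (Λ a ^ 2 * Λ b) := by
  have jordan := map_mul_add_map_mul_swap_of_map_sq hsq
  have h₁ := jordan a (a * b + b * a)
  have h₂ := jordan (a ^ 2) b
  rw [show a * (a * b + b * a) = a ^ 2 * b + a * b * a by noncomm_ring,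
    show (a * b + b * a) * a = a * b * a + b * a ^ 2 by noncomm_ring] at h₁
  simp only [map_add] at h₁
  rw [hsq] at h₂
  linear_combination h₁ - h₂ + 2 * Λ a * jordan a b

theorem map_mul_mul_self_of_map_sq [IsDomain R] [NeZero (2 : R)]
    (hsq : ∀ a, Λ (a ^ 2) = Λ a ^ 2) (a b : A) :
    Λ (a * b * a) = Λ a ^ 2 * Λ b :=
  mul_left_cancel₀ two_ne_zero (two_mul_map_mul_mul_self_of_map_sq hsq a b)

theorem two_mul_sq_map_mul_sub_of_map_sq [IsDomain R] [NeZero (2 : R)]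
    (hsq : ∀ a, Λ (a ^ 2) = Λ a ^ 2) (a b : A) :
    2 * (Λ (a * b) - Λ a * Λ b) ^ 2 = 0 := by
  have h := hsq (a * b + b * a)
  rw [show (a * b + b * a) ^ 2 = (a * b) ^ 2 + a * b ^ 2 * a + b * a ^ 2 * b + (b * a) ^ 2 by
    noncomm_ring] at h
  simp only [map_add, hsq, map_mul_mul_self_of_map_sq hsq] at h
  linear_combination h + 2 * Λ (a * b) * map_mul_add_map_mul_swap_of_map_sq hsq a b

theorem map_mul_of_map_sq [IsDomain R] [NeZero (2 : R)]
    (hsq : ∀ a, Λ (a ^ 2) = Λ a ^ 2) (a b : A) :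
    Λ (a * b) = Λ a * Λ b := by
  have h := two_mul_sq_map_mul_sub_of_map_sq hsq a b
  rw [mul_eq_zero, or_iff_right two_ne_zero, sq_eq_zero_iff, sub_eq_zero] at h
  exact h

end LinearMap

theorem square_multiplicative_general {A : Type*} [Ring A] [Algebra ℂ A]
    (Λ : A →ₗ[ℂ] ℂ) (hsq : ∀ a : A, Λ (a ^ 2) = (Λ a) ^ 2) :
    ∀ a b : A, Λ (a * b) = Λ a * Λ b :=
  LinearMap.map_mul_of_map_sq hsq

/-- If `A` is a unital associative algebra over `ℂ` (no topology assumed) and `Λ : A → ℂ`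
is a linear functional with `Λ 1 = 1` satisfying `Λ (a²) = (Λ a)²` for all `a`, then
`Λ` is multiplicative. -/
theorem square_multiplicative {A : Type*} [Ring A] [Algebra ℂ A]
    (Λ : A →ₗ[ℂ] ℂ) (h1 : Λ 1 = 1) (hsq : ∀ a : A, Λ (a ^ 2) = (Λ a) ^ 2) :
    ∀ a b : A, Λ (a * b) = Λ a * Λ b :=
  square_multiplicative_general Λ hsq
end

section
/- Let A be a commutative complex unital Banach algebra, M a left A-module, and S a non-empty subset of M satisfying condition (S2). Define s₁ ∼ s₂ iff there exist a₁, a₂ ∈ A with a₁·S ∪ a₂·S ⊆ S and a₁·s₁ = a₂·s₂, let S₀ be an equivalence class of S under ∼, and let M₀ be the A-submodule of M generated by S₀. If Λ : M → ℂ is a ℂ-linear functional (not assumed continuous) with Λ(s) ≠ 0 for all s ∈ S₀, then there exists a character χ₀ on A such that Λ(a·m) = χ₀(a)·Λ(m) for all a ∈ A and m ∈ M₀. -/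
/-!
The analytic input is the Gleason–Kahane–Żelazko argument: let `φ` be a unital linear functional
on a complex Banach algebra that vanishes at no unit. For each `n`, `z ↦ φ ((z - x) ^ n)` is a
monic polynomial of degree `n` whose roots lie in the spectrum of `x`, because `φ` kills no unit.
By Vieta its roots have `e₁ = n φ(x)` and `e₂ = (n choose 2) φ(x²)`, so by Newton their power sum
`p₂` satisfies `n² (φ(x)² - φ(x²)) = p₂ - n φ(x²)`, while `‖p₂‖ ≤ n (‖x‖ ‖1‖)²`. Dividing by `n²`
and letting `n → ∞` gives `φ(x²) = φ(x)²`, and polarisation gives multiplicativity when the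
algebra is commutative.

For `s ∈ S₀` the functional `a ↦ Λ(a • s) / Λ(s)` vanishes at no unit since `S₀` is stable under
units, so it is a character `χₛ`. If `a₁ • s = a₂ • s₀`, then `χₛ` and `χₛ₀` both describe `Λ` on
the multiples of this common element, at which `Λ` is nonzero, so `χₛ = χₛ₀`. Finally, the
elements `m` with `Λ(a • m) = χ(a) Λ(m)` for all `a` form a submodule.
-/

open Polynomial

namespace Multiset

variable {R : Type*} [CommSemiring R]

theorem esymm_one (s : Multiset R) : s.esymm 1 = s.sum := by
  simp [esymm, powersetCard_one]

theorem esymm_cons_succ (a : R) (s : Multiset R) (k : ℕ) :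
    (a ::ₘ s).esymm (k + 1) = a * s.esymm k + s.esymm (k + 1) := by
  simp only [esymm, powersetCard_cons, map_add, sum_add, map_map, Function.comp_def, prod_cons,
    sum_map_mul_left]
  ring

theorem sq_sum_eq_sum_map_sq_add_two_mul_esymm_two (s : Multiset R) :
    s.sum ^ 2 = (s.map (· ^ 2)).sum + 2 * s.esymm 2 := by
  induction s using Multiset.induction_on with
  | empty => simp [esymm, powersetCard_zero_right]
  | cons a s ih =>
    rw [esymm_cons_succ, esymm_one, sum_cons, map_cons, sum_cons, add_sq, ih]
    ring

theorem norm_sum_map_le_card_mul {ι E : Type*} [SeminormedAddCommGroup E] {s : Multiset ι}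
    {f : ι → E} {C : ℝ} (h : ∀ i ∈ s, ‖f i‖ ≤ C) : ‖(s.map f).sum‖ ≤ card s * C := by
  calc ‖(s.map f).sum‖ ≤ (s.map fun i => ‖f i‖).sum := by
        simpa only [map_map, Function.comp_def] using norm_multiset_sum_le (s.map f)
    _ ≤ (s.map fun _ => C).sum := sum_map_le_sum_map _ _ h
    _ = card s * C := by simp

end Multiset

section GleasonKahaneZelazko

variable {A : Type*} [NormedRing A] [NormedAlgebra ℂ A] (φ : A →ₗ[ℂ] ℂ)

noncomputable def powSubPoly (x : A) (n : ℕ) : ℂ[X] :=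
  ∑ k ∈ Finset.range (n + 1), monomial k ((n.choose k : ℂ) * φ ((-x) ^ (n - k)))

theorem coeff_powSubPoly (x : A) (n k : ℕ) :
    (powSubPoly φ x n).coeff k = n.choose k * φ ((-x) ^ (n - k)) := by
  simp only [powSubPoly, finsetSum_coeff, coeff_monomial, Finset.sum_ite_eq', Finset.mem_range]
  split_ifs with hk
  · rfl
  · rw [Nat.choose_eq_zero_of_lt (by omega), Nat.cast_zero, zero_mul]

theorem eval_powSubPoly (x : A) (n : ℕ) (z : ℂ) :
    (powSubPoly φ x n).eval z = φ ((algebraMap ℂ A z - x) ^ n) := by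
  rw [sub_eq_add_neg, (Algebra.commute_algebraMap_left z (-x)).add_pow, map_sum, powSubPoly,
    eval_finsetSum]
  refine Finset.sum_congr rfl fun k _ => ?_
  rw [eval_monomial, ← map_pow, ← Algebra.smul_def, smul_mul_assoc, ← nsmul_eq_mul', map_smul,
    map_nsmul, smul_eq_mul, nsmul_eq_mul]
  ring

theorem natDegree_powSubPoly_le (x : A) (n : ℕ) : (powSubPoly φ x n).natDegree ≤ n :=
  natDegree_le_iff_coeff_eq_zero.2 fun k hk => by
    rw [coeff_powSubPoly, Nat.choose_eq_zero_of_lt hk, Nat.cast_zero, zero_mul]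

variable {φ}

theorem coeff_powSubPoly_self (hφ : φ 1 = 1) (x : A) (n : ℕ) :
    (powSubPoly φ x n).coeff n = 1 := by
  rw [coeff_powSubPoly, Nat.choose_self, Nat.sub_self, pow_zero, hφ, Nat.cast_one, one_mul]

theorem monic_powSubPoly (hφ : φ 1 = 1) (x : A) (n : ℕ) : (powSubPoly φ x n).Monic :=
  monic_of_natDegree_le_of_coeff_eq_one n (natDegree_powSubPoly_le φ x n)
    (coeff_powSubPoly_self hφ x n)

theorem natDegree_powSubPoly (hφ : φ 1 = 1) (x : A) (n : ℕ) : (powSubPoly φ x n).natDegree = n :=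
  natDegree_eq_of_le_of_coeff_ne_zero (natDegree_powSubPoly_le φ x n)
    (by rw [coeff_powSubPoly_self hφ]; exact one_ne_zero)

theorem esymm_roots_powSubPoly (hφ : φ 1 = 1) (x : A) {n k : ℕ} (hk : k ≤ n) :
    (powSubPoly φ x n).roots.esymm k = n.choose k * φ (x ^ k) := by
  have hroots := splits_iff_card_roots.1 (IsAlgClosed.splits (powSubPoly φ x n))
  have h := coeff_eq_esymm_roots_of_card hroots (k := n - k)
    (by rw [natDegree_powSubPoly hφ]; omega)
  rw [natDegree_powSubPoly hφ, (monic_powSubPoly hφ x n).leadingCoeff, coeff_powSubPoly,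
    Nat.sub_sub_self hk, Nat.choose_symm hk, ← neg_one_smul ℂ x, _root_.smul_pow, map_smul,
    smul_eq_mul] at h
  refine mul_left_cancel₀ (pow_ne_zero k (neg_ne_zero.2 one_ne_zero)) ?_
  linear_combination -h

theorem mem_spectrum_of_mem_roots_powSubPoly (hunit : ∀ a : A, IsUnit a → φ a ≠ 0) {x : A}
    {n : ℕ} {z : ℂ} (hz : z ∈ (powSubPoly φ x n).roots) : z ∈ spectrum ℂ x := by
  rw [spectrum.mem_iff]
  intro hu
  exact hunit _ (hu.pow n) (by rw [← eval_powSubPoly, (mem_roots'.1 hz).2])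

variable [CompleteSpace A]

theorem natCast_mul_norm_sq_sub_le (hφ : φ 1 = 1) (hunit : ∀ a : A, IsUnit a → φ a ≠ 0) (x : A)
    {n : ℕ} (hn : 2 ≤ n) :
    n * ‖φ x ^ 2 - φ (x ^ 2)‖ ≤ (‖x‖ * ‖(1 : A)‖) ^ 2 + ‖φ (x ^ 2)‖ := by
  set r := (powSubPoly φ x n).roots
  have hcard : Multiset.card r = n := by
    rw [splits_iff_card_roots.1 (IsAlgClosed.splits _), natDegree_powSubPoly hφ]
  have hsum : r.sum = n * φ x := by
    rw [← Multiset.esymm_one, esymm_roots_powSubPoly hφ x (by omega), Nat.choose_one_right, pow_one]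
  have hp₂ : n ^ 2 * (φ x ^ 2 - φ (x ^ 2)) = (r.map (· ^ 2)).sum - n * φ (x ^ 2) := by
    have := r.sq_sum_eq_sum_map_sq_add_two_mul_esymm_two
    rw [hsum, esymm_roots_powSubPoly hφ x hn, Nat.cast_choose_two] at this
    linear_combination this
  have hp₂_le : ‖(r.map (· ^ 2)).sum‖ ≤ n * (‖x‖ * ‖(1 : A)‖) ^ 2 := by
    rw [← hcard]
    refine Multiset.norm_sum_map_le_card_mul fun z hz => ?_
    rw [norm_pow]
    exact pow_le_pow_left₀ (norm_nonneg z)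
      (spectrum.norm_le_norm_mul_of_mem (mem_spectrum_of_mem_roots_powSubPoly hunit hz)) 2
  have hn₀ : (0 : ℝ) < n := by positivity
  refine le_of_mul_le_mul_left ?_ hn₀
  calc (n : ℝ) * (n * ‖φ x ^ 2 - φ (x ^ 2)‖) = ‖(n : ℂ) ^ 2 * (φ x ^ 2 - φ (x ^ 2))‖ := by
        rw [norm_mul, norm_pow, Complex.norm_natCast]; ring
    _ ≤ ‖(r.map (· ^ 2)).sum‖ + ‖(n : ℂ) * φ (x ^ 2)‖ := by rw [hp₂]; exact norm_sub_le _ _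
    _ ≤ n * ((‖x‖ * ‖(1 : A)‖) ^ 2 + ‖φ (x ^ 2)‖) := by
        rw [norm_mul, Complex.norm_natCast]; linarith

theorem map_sq_of_map_isUnit_ne_zero (hφ : φ 1 = 1) (hunit : ∀ a : A, IsUnit a → φ a ≠ 0)
    (x : A) : φ (x ^ 2) = φ x ^ 2 := by
  set K := (‖x‖ * ‖(1 : A)‖) ^ 2 + ‖φ (x ^ 2)‖
  have h : ‖φ x ^ 2 - φ (x ^ 2)‖ ≤ 0 :=
    ge_of_tendsto (tendsto_const_div_atTop_nhds_zero_nat K) <|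
      Filter.eventually_atTop.2 ⟨2, fun n hn => by
        rw [le_div_iff₀' (by positivity)]
        exact natCast_mul_norm_sq_sub_le hφ hunit x hn⟩
  rw [norm_le_zero_iff, sub_eq_zero] at h
  exact h.symm

end GleasonKahaneZelazko

theorem map_mul_of_map_isUnit_ne_zero {A : Type*} [NormedCommRing A] [NormedAlgebra ℂ A]
    [CompleteSpace A] {φ : A →ₗ[ℂ] ℂ} (hφ : φ 1 = 1) (hunit : ∀ a : A, IsUnit a → φ a ≠ 0)
    (a b : A) : φ (a * b) = φ a * φ b := by
  have hsq := map_sq_of_map_isUnit_ne_zero hφ hunit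
  have h := hsq (a + b)
  rw [add_sq, mul_assoc, two_mul, map_add, map_add, map_add, map_add, hsq a, hsq b] at h
  linear_combination h / 2

namespace AddMonoidHom

variable {A M : Type*} [Semiring A] [Algebra ℂ A] [AddCommMonoid M] [Module A M]

def charSubmodule (Λ : M →+ ℂ) (χ : A →ₐ[ℂ] ℂ) : Submodule A M where
  carrier := {m | ∀ a : A, Λ (a • m) = χ a * Λ m}
  add_mem' {m n} hm hn a := by rw [smul_add, map_add, map_add, hm, hn, mul_add]
  zero_mem' a := by rw [smul_zero, map_zero, mul_zero]
  smul_mem' b {m} hm a := by rw [smul_smul, hm (a * b), hm b, map_mul, mul_assoc]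

theorem eq_of_mem_charSubmodule {Λ : M →+ ℂ} {χ χ' : A →ₐ[ℂ] ℂ} {m : M}
    (hχ : m ∈ Λ.charSubmodule χ) (hχ' : m ∈ Λ.charSubmodule χ') (hm : Λ m ≠ 0) : χ = χ' :=
  AlgHom.ext fun a => mul_right_cancel₀ hm ((hχ a).symm.trans (hχ' a))

end AddMonoidHom

section SimClass

def simClass (A : Type*) {M : Type*} [SMul A M] (S : Set M) (s₀ : M) : Set M :=
  {s ∈ S | ∃ a₁ a₂ : A, (∀ t ∈ S, a₁ • t ∈ S) ∧ (∀ t ∈ S, a₂ • t ∈ S) ∧ a₁ • s = a₂ • s₀}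

variable {A M : Type*} [CommMonoid A] [MulAction A M] {S : Set M} {s₀ : M}

theorem self_mem_simClass (hs₀ : s₀ ∈ S) : s₀ ∈ simClass A S s₀ :=
  ⟨hs₀, 1, 1, fun t ht => by rwa [one_smul], fun t ht => by rwa [one_smul], rfl⟩

theorem smul_mem_simClass_of_isUnit (hS : ∀ a : A, IsUnit a → ∀ s ∈ S, a • s ∈ S) {s : M}
    (hs : s ∈ simClass A S s₀) {u : A} (hu : IsUnit u) : u • s ∈ simClass A S s₀ := by
  obtain ⟨hsS, a₁, a₂, h₁, h₂, heq⟩ := hs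
  refine ⟨hS u hu s hsS, a₁, u * a₂, h₁, fun t ht => ?_, ?_⟩
  · rw [mul_smul]
    exact hS u hu _ (h₂ t ht)
  · rw [smul_comm, heq, smul_smul]

end SimClass

section Banach

variable {A M : Type*} [NormedCommRing A] [NormedAlgebra ℂ A] [CompleteSpace A] [AddCommGroup M]
  [Module A M]

theorem AddMonoidHom.exists_mem_charSubmodule (Λ : M →+ ℂ)
    (hsmul : ∀ (c : ℂ) (m : M), Λ (algebraMap ℂ A c • m) = c * Λ m) {s : M}
    (hs : ∀ u : A, IsUnit u → Λ (u • s) ≠ 0) : ∃ χ : A →ₐ[ℂ] ℂ, s ∈ Λ.charSubmodule χ := by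
  have hΛs : Λ s ≠ 0 := by simpa using hs 1 isUnit_one
  let φ : A →ₗ[ℂ] ℂ :=
    { toFun a := Λ (a • s) / Λ s
      map_add' a b := by rw [add_smul, map_add, add_div]
      map_smul' c a := by
        rw [Algebra.smul_def, mul_smul, hsmul, RingHom.id_apply, smul_eq_mul, mul_div_assoc] }
  have hφ : φ 1 = 1 := by simp [φ, hΛs]
  have hunit : ∀ a : A, IsUnit a → φ a ≠ 0 := fun a ha => div_ne_zero (hs a ha) hΛs
  exact ⟨AlgHom.ofLinearMap φ hφ (map_mul_of_map_isUnit_ne_zero hφ hunit),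
    fun a => (div_mul_cancel₀ _ hΛs).symm⟩

theorem simClass_subset_charSubmodule {S : Set M}
    (hS : ∀ a : A, IsUnit a → ∀ s ∈ S, a • s ∈ S) {s₀ : M} (Λ : M →+ ℂ)
    (hsmul : ∀ (c : ℂ) (m : M), Λ (algebraMap ℂ A c • m) = c * Λ m)
    (hne : ∀ s ∈ simClass A S s₀, Λ s ≠ 0) {χ : A →ₐ[ℂ] ℂ} (hχ : s₀ ∈ Λ.charSubmodule χ) :
    simClass A S s₀ ⊆ Λ.charSubmodule χ := by
  intro s hs
  obtain ⟨χs, hχs⟩ := Λ.exists_mem_charSubmodule hsmul fun u hu =>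
    hne _ (smul_mem_simClass_of_isUnit hS hs hu)
  obtain ⟨hsS, a₁, a₂, h₁, h₂, heq⟩ := hs
  have ha₁s : a₁ • s ∈ simClass A S s₀ :=
    ⟨h₁ s hsS, 1, a₂, fun t ht => by rwa [one_smul], h₂, by rw [one_smul, heq]⟩
  have hχs_eq : χs = χ := Λ.eq_of_mem_charSubmodule (Submodule.smul_mem _ a₁ hχs)
    (heq ▸ Submodule.smul_mem _ a₂ hχ) (hne _ ha₁s)
  exact hχs_eq ▸ hχs

end Banach

theorem gkz_module_class_general {A : Type*} [NormedCommRing A] [NormedAlgebra ℂ A]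
    [CompleteSpace A] {M : Type*} [AddCommGroup M] [Module A M]
    (S : Set M)
    (hS2 : ∀ a : A, IsUnit a → ∀ s ∈ S, a • s ∈ S)
    (S₀ : Set M)
    (hS₀ : ∃ s₀ ∈ S, S₀ = {s ∈ S | ∃ a₁ a₂ : A,
      (∀ t ∈ S, a₁ • t ∈ S) ∧ (∀ t ∈ S, a₂ • t ∈ S) ∧ a₁ • s = a₂ • s₀})
    (Λ : M → ℂ)
    (hadd : ∀ m n : M, Λ (m + n) = Λ m + Λ n)
    (hsmul : ∀ (c : ℂ) (m : M), Λ ((algebraMap ℂ A c) • m) = c * Λ m)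
    (hne : ∀ s ∈ S₀, Λ s ≠ 0) :
    ∃ χ₀ : A →ₐ[ℂ] ℂ, ∀ a : A, ∀ m ∈ Submodule.span A S₀, Λ (a • m) = χ₀ a * Λ m := by
  obtain ⟨s₀, hs₀, rfl⟩ := hS₀
  let Λ' : M →+ ℂ := AddMonoidHom.mk' Λ hadd
  have hs₀_mem : s₀ ∈ simClass A S s₀ := self_mem_simClass hs₀
  obtain ⟨χ, hχ⟩ := Λ'.exists_mem_charSubmodule hsmul fun u hu =>
    hne _ (smul_mem_simClass_of_isUnit hS2 hs₀_mem hu)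
  have hspan : Submodule.span A (simClass A S s₀) ≤ Λ'.charSubmodule χ :=
    Submodule.span_le.2 (simClass_subset_charSubmodule hS2 Λ' hsmul hne hχ)
  exact ⟨χ, fun a m hm => hspan hm a⟩

/-- Let `A` be a commutative complex unital Banach algebra, `M` a left `A`-module and
`S ⊆ M` non-empty satisfying (S2).  Let `S₀` be an equivalence class of `S` under the
relation `s₁ ∼ s₂ ⇔ ∃ a₁ a₂, a₁ • S ∪ a₂ • S ⊆ S ∧ a₁ • s₁ = a₂ • s₂`, and let `M₀` be
the `A`-submodule generated by `S₀`.  If `Λ : M → ℂ` is a ℂ-linear functional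
(not assumed continuous) with `Λ s ≠ 0` for all `s ∈ S₀`, then there is a character
`χ₀` on `A` with `Λ (a • m) = χ₀ a * Λ m` for all `a ∈ A` and `m ∈ M₀`. -/
theorem gkz_module_class {A : Type*} [NormedCommRing A] [NormedAlgebra ℂ A]
    [CompleteSpace A] {M : Type*} [AddCommGroup M] [Module A M]
    (S : Set M) (hSne : S.Nonempty)
    (hS2 : ∀ a : A, IsUnit a → ∀ s ∈ S, a • s ∈ S)
    (S₀ : Set M)
    (hS₀ : ∃ s₀ ∈ S, S₀ = {s ∈ S | ∃ a₁ a₂ : A,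
      (∀ t ∈ S, a₁ • t ∈ S) ∧ (∀ t ∈ S, a₂ • t ∈ S) ∧ a₁ • s = a₂ • s₀})
    (Λ : M → ℂ)
    (hadd : ∀ m n : M, Λ (m + n) = Λ m + Λ n)
    (hsmul : ∀ (c : ℂ) (m : M), Λ ((algebraMap ℂ A c) • m) = c * Λ m)
    (hne : ∀ s ∈ S₀, Λ s ≠ 0) :
    ∃ χ₀ : A →ₐ[ℂ] ℂ, ∀ a : A, ∀ m ∈ Submodule.span A S₀, Λ (a • m) = χ₀ a * Λ m :=
  gkz_module_class_general S hS2 S₀ hS₀ Λ hadd hsmul hne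
end
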